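/- arXiv:1708.06083 — 3 statements merged into one kernel-verified Lean document; each statement's English description precedes it below -/
import Mathlib

section
/- Let k ≥ 2 be an integer, n ≥ 2, and let x₀, x₁, ..., x_{n-1} be i.i.d. random variables uniformly distributed on {1, 2, ..., k}. Define the perimeter P_n := 2n + x₀ + x_{n-1} + Σ_{i=1}^{n-1} |x_i - x_{i-1}|. Then E(P_n) = ((3k + 2k² + 1) + (k² + 6k - 1)·n) / (3k). -/
/-!
By linearity, `E P_n = 2n + E x₀ + E x_{n-1} + ∑ E |x_i - x_{i-1}|`. Every letter has mean
`(k + 1) / 2`, and since consecutive letters are independent, each `E |x_i - x_{i-1}|` is the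
average `k⁻² ∑_{i,j ≤ k} |i - j| = (k² - 1) / (3k)` over the product of two uniform laws.
-/

open MeasureTheory ProbabilityTheory
open scoped ENNReal

/-- The uniform probability measure on the integers `{1, ..., k}` (as a measure on `ℕ`). -/
noncomputable def unifMeasure (k : ℕ) : Measure ℕ :=
  (k : ℝ≥0∞)⁻¹ • ∑ i ∈ Finset.Icc 1 k, Measure.dirac i

open Finset

lemma integrable_unifMeasure (k : ℕ) (f : ℕ → ℝ) : Integrable f (unifMeasure k) := by
  rcases k.eq_zero_or_pos with rfl | hk
  · simp [unifMeasure]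
  · refine Integrable.smul_measure ?_ (by simpa using hk.ne')
    exact integrable_finsetSum_measure.2 fun i _ => integrable_dirac enorm_lt_top

lemma integral_unifMeasure (k : ℕ) (f : ℕ → ℝ) :
    ∫ a, f a ∂unifMeasure k = (k : ℝ)⁻¹ * ∑ i ∈ Icc 1 k, f i := by
  rw [unifMeasure, integral_smul_measure,
    integral_finsetSum_measure fun i _ => integrable_dirac enorm_lt_top]
  simp [integral_dirac]

lemma sum_Icc_natCast (k : ℕ) : ∑ i ∈ Icc 1 k, (i : ℝ) = k * (k + 1) / 2 := by
  induction k with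
  | zero => simp
  | succ m ih =>
    rw [sum_Icc_succ_top (by omega), ih]
    push_cast; ring

lemma sum_Icc_abs_sub_succ (m : ℕ) :
    ∑ i ∈ Icc 1 m, |(i : ℝ) - (m + 1 : ℕ)| = m * (m + 1) / 2 := by
  have hterm : ∀ i ∈ Icc 1 m, |(i : ℝ) - (m + 1 : ℕ)| = (m + 1 : ℕ) - i := fun i hi => by
    have hi' : (i : ℝ) ≤ (m + 1 : ℕ) := by exact_mod_cast (mem_Icc.1 hi).2.trans m.le_succ
    rw [abs_sub_comm, abs_of_nonneg (sub_nonneg.2 hi')]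
  rw [sum_congr rfl hterm, sum_sub_distrib, sum_const, Nat.card_Icc, sum_Icc_natCast]
  push_cast; ring

lemma sum_sum_abs_sub_Icc (k : ℕ) :
    ∑ i ∈ Icc 1 k, ∑ j ∈ Icc 1 k, |(i : ℝ) - j| = k * (k ^ 2 - 1) / 3 := by
  induction k with
  | zero => simp
  | succ m ih =>
    simp only [sum_Icc_succ_top (by omega : 1 ≤ m + 1), sum_add_distrib, ih]
    simp_rw [abs_sub_comm ((m + 1 : ℕ) : ℝ), sum_Icc_abs_sub_succ, sub_self, abs_zero]
    push_cast; ring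

section RandomVariables

variable {Ω : Type*} [MeasurableSpace Ω] {μ : Measure Ω} {k : ℕ} {X Y : Ω → ℕ}

lemma integrable_comp_of_map_eq_unifMeasure (hX : AEMeasurable X μ)
    (hXk : μ.map X = unifMeasure k) (f : ℕ → ℝ) : Integrable (fun ω => f (X ω)) μ :=
  (integrable_map_measure ((measurable_of_countable _).aestronglyMeasurable) hX).1
    (hXk ▸ integrable_unifMeasure k f)

lemma integral_comp_of_map_eq_unifMeasure (hX : AEMeasurable X μ)
    (hXk : μ.map X = unifMeasure k) (f : ℕ → ℝ) :
    ∫ ω, f (X ω) ∂μ = (k : ℝ)⁻¹ * ∑ i ∈ Icc 1 k, f i := by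
  rw [← integral_map hX (measurable_of_countable _).aestronglyMeasurable, hXk,
    integral_unifMeasure]

lemma integral_comp_pair_of_indepFun [IsFiniteMeasure μ] (hXY : IndepFun X Y μ)
    (hX : AEMeasurable X μ) (hY : AEMeasurable Y μ)
    (hXk : μ.map X = unifMeasure k) (hYk : μ.map Y = unifMeasure k) (g : ℕ × ℕ → ℝ) :
    ∫ ω, g (X ω, Y ω) ∂μ = (k : ℝ)⁻¹ ^ 2 * ∑ i ∈ Icc 1 k, ∑ j ∈ Icc 1 k, g (i, j) := by
  have hlaw : μ.map (fun ω => (X ω, Y ω)) = (unifMeasure k).prod (unifMeasure k) := by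
    rw [(indepFun_iff_map_prod_eq_prod_map_map hX hY).1 hXY, hXk, hYk]
  have hg : Integrable g ((unifMeasure k).prod (unifMeasure k)) :=
    (integrable_prod_iff (measurable_of_countable _).aestronglyMeasurable).2
      ⟨ae_of_all _ fun _ => integrable_unifMeasure k _, integrable_unifMeasure k _⟩
  rw [← integral_map (hX.prodMk hY) (measurable_of_countable _).aestronglyMeasurable, hlaw,
    integral_prod g hg]
  simp only [integral_unifMeasure, mul_sum, pow_two, mul_assoc]

lemma integral_natCast_of_map_eq_unifMeasure (hk : k ≠ 0) (hX : AEMeasurable X μ)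
    (hXk : μ.map X = unifMeasure k) : ∫ ω, (X ω : ℝ) ∂μ = (k + 1) / 2 := by
  rw [integral_comp_of_map_eq_unifMeasure hX hXk, sum_Icc_natCast]
  field_simp

lemma integral_abs_sub_of_indepFun [IsFiniteMeasure μ] (hk : k ≠ 0) (hXY : IndepFun X Y μ)
    (hX : AEMeasurable X μ) (hY : AEMeasurable Y μ)
    (hXk : μ.map X = unifMeasure k) (hYk : μ.map Y = unifMeasure k) :
    ∫ ω, |(X ω : ℝ) - Y ω| ∂μ = (k ^ 2 - 1) / (3 * k) := by
  rw [integral_comp_pair_of_indepFun hXY hX hY hXk hYk fun p => |(p.1 : ℝ) - p.2|,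
    sum_sum_abs_sub_Icc]
  field_simp

end RandomVariables

theorem mean_perimeter_uniform
    {Ω : Type*} [MeasurableSpace Ω] (μ : Measure Ω) [IsProbabilityMeasure μ]
    (k : ℕ) (hk : 2 ≤ k) (n : ℕ) (hn : 2 ≤ n) (x : ℕ → Ω → ℕ)
    (hmeas : ∀ i, i < n → Measurable (x i))
    (hdist : ∀ i, i < n → Measure.map (x i) μ = unifMeasure k)
    (hindep : iIndepFun (fun i : Fin n => x i) μ) :
    ∫ ω, ((2 * n : ℝ) + (x 0 ω : ℝ) + (x (n - 1) ω : ℝ)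
        + ∑ i ∈ Finset.Icc 1 (n - 1), |(x i ω : ℝ) - (x (i - 1) ω : ℝ)|) ∂μ
      = ((3 * (k : ℝ) + 2 * (k : ℝ) ^ 2 + 1)
          + ((k : ℝ) ^ 2 + 6 * (k : ℝ) - 1) * (n : ℝ)) / (3 * (k : ℝ)) := by
  have hk0 : k ≠ 0 := by omega
  have hx : ∀ i < n, AEMeasurable (x i) μ := fun i hi => (hmeas i hi).aemeasurable
  have hint : ∀ i < n, Integrable (fun ω => (x i ω : ℝ)) μ := fun i hi =>
    integrable_comp_of_map_eq_unifMeasure (hx i hi) (hdist i hi) _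
  have hmean : ∀ i < n, ∫ ω, (x i ω : ℝ) ∂μ = (k + 1) / 2 := fun i hi =>
    integral_natCast_of_map_eq_unifMeasure hk0 (hx i hi) (hdist i hi)
  have hgap_int : ∀ i ∈ Icc 1 (n - 1), Integrable (fun ω => |(x i ω : ℝ) - x (i - 1) ω|) μ :=
    fun i hi => ((hint i (by grind)).sub (hint (i - 1) (by grind))).abs
  have hgap_mean : ∀ i ∈ Icc 1 (n - 1),
      ∫ ω, |(x i ω : ℝ) - x (i - 1) ω| ∂μ = (k ^ 2 - 1) / (3 * k) := fun i hi =>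
    integral_abs_sub_of_indepFun hk0
      (hindep.indepFun (i := ⟨i, by grind⟩) (j := ⟨i - 1, by grind⟩) (by grind))
      (hx i (by grind)) (hx (i - 1) (by grind)) (hdist i (by grind)) (hdist (i - 1) (by grind))
  have h0 := hint 0 (by omega)
  have hlast := hint (n - 1) (by omega)
  rw [integral_add (by fun_prop) (integrable_finsetSum _ hgap_int),
    integral_add (by fun_prop) hlast, integral_add (by fun_prop) h0, integral_const,
    integral_finsetSum _ hgap_int, sum_congr rfl hgap_mean, hmean 0 (by omega), hmean _ (by omega), sum_const, Nat.card_Icc,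
    Nat.add_sub_cancel, nsmul_eq_mul, Nat.cast_pred (by omega), probReal_univ, one_smul]
  field_simp
  ring
end

section
/- Let k ≥ 2 be an integer and let x₀, x₁ be independent random variables each uniformly distributed on {1, 2, ..., k}. Then E(x₀ · |x₁ - x₀|) = (k - 1)(k + 1)²/(6k). -/
open MeasureTheory ProbabilityTheory
open scoped ENNReal

lemma my_integrable_dirac {α : Type*} [MeasurableSpace α] [MeasurableSingletonClass α]
    (f : α → ℝ) (a : α) : Integrable f (Measure.dirac a) := by
  have h : f =ᵐ[Measure.dirac a] fun _ => f a := by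
    rw [MeasureTheory.ae_dirac_eq]
    exact Filter.eventually_pure.2 rfl
  exact (integrable_const (f a)).congr h.symm

lemma my_smul_prod (c : ℝ≥0∞) {α β : Type*} [MeasurableSpace α] [MeasurableSpace β]
    (μ : Measure α) (ν : Measure β) [SFinite μ] [SFinite ν] :
    (c • μ).prod ν = c • (μ.prod ν) := by
  ext s hs
  rw [Measure.prod_apply hs, Measure.smul_apply, Measure.prod_apply hs,
    lintegral_smul_measure]

lemma my_prod_smul (c : ℝ≥0∞) {α β : Type*} [MeasurableSpace α] [MeasurableSpace β]
    (μ : Measure α) (ν : Measure β) [SFinite μ] [SFinite ν] :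
    μ.prod (c • ν) = c • (μ.prod ν) := by
  ext s hs
  rw [Measure.prod_apply hs, Measure.smul_apply, Measure.prod_apply hs]
  simp_rw [Measure.smul_apply, smul_eq_mul]
  rw [lintegral_const_mul _ (measurable_measure_prodMk_left hs)]

lemma dirac_sum_prod {α β : Type*} [MeasurableSpace α] [MeasurableSpace β]
    {ι ι' : Type*} (s : Finset ι) (t : Finset ι') (f : ι → α) (g : ι' → β) :
    (∑ i ∈ s, Measure.dirac (f i)).prod (∑ j ∈ t, Measure.dirac (g j)) =
      ∑ p ∈ s ×ˢ t, Measure.dirac (f p.1, g p.2) := by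
  rw [← Measure.sum_coe_finset, ← Measure.sum_coe_finset, Measure.prod_sum]
  simp_rw [Measure.dirac_prod_dirac]
  rw [Measure.sum_fintype]
  rw [Fintype.sum_prod_type, Finset.sum_product,
    ← Finset.sum_coe_sort s (fun i => ∑ j ∈ t, Measure.dirac (f i, g j))]
  exact Finset.sum_congr rfl fun x _ =>
    Finset.sum_coe_sort t (fun j => Measure.dirac (f (x : ι), g j))

lemma unif_prod (k : ℕ) :
    (unifMeasure k).prod (unifMeasure k)
      = ((k : ℝ≥0∞)⁻¹ * (k : ℝ≥0∞)⁻¹) •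
          ∑ p ∈ Finset.Icc 1 k ×ˢ Finset.Icc 1 k, Measure.dirac p := by
  rw [unifMeasure, my_smul_prod, my_prod_smul, smul_smul]
  congr 1
  have := dirac_sum_prod (Finset.Icc 1 k) (Finset.Icc 1 k) (id : ℕ → ℕ) (id : ℕ → ℕ)
  simpa using this

lemma sum_Icc_id (k : ℕ) : ∑ i ∈ Finset.Icc 1 k, (i : ℝ) = k * (k + 1) / 2 := by
  induction k with
  | zero => simp
  | succ n ih =>
      rw [Finset.sum_Icc_succ_top (by omega), ih]
      push_cast
      ring

lemma sum_Icc_sq (k : ℕ) : ∑ i ∈ Finset.Icc 1 k, (i : ℝ) ^ 2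
    = k * (k + 1) * (2 * k + 1) / 6 := by
  induction k with
  | zero => simp
  | succ n ih =>
      rw [Finset.sum_Icc_succ_top (by omega), ih]
      push_cast
      ring

lemma cross_sum (k : ℕ) :
    ∑ p ∈ Finset.Icc 1 k ×ˢ Finset.Icc 1 k, ((p.1 : ℝ) * |(p.2 : ℝ) - (p.1 : ℝ)|)
      = k * (k - 1) * (k + 1) ^ 2 / 6 := by
  induction k with
  | zero => simp
  | succ n ih =>
      rw [Finset.sum_product] at ih ⊢
      have houter := Finset.sum_Icc_succ_top (a := 1) (b := n) (by omega)
        (f := fun a => ∑ b ∈ Finset.Icc 1 (n+1), ((a : ℝ) * |(b : ℝ) - (a : ℝ)|))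
      rw [houter]
      -- split inner sums
      have hinner : ∀ a : ℕ, a ∈ Finset.Icc 1 n →
          ∑ b ∈ Finset.Icc 1 (n+1), ((a : ℝ) * |(b : ℝ) - (a : ℝ)|)
            = (∑ b ∈ Finset.Icc 1 n, ((a : ℝ) * |(b : ℝ) - (a : ℝ)|))
              + (a : ℝ) * ((n + 1 : ℝ) - a) := by
        intro a ha
        rw [Finset.sum_Icc_succ_top (by omega)]
        rw [Finset.mem_Icc] at ha
        have h1 : (a : ℝ) ≤ (n + 1 : ℝ) := by exact_mod_cast Nat.le_succ_of_le ha.2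
        rw [abs_of_nonneg (by push_cast; linarith)]
        push_cast
        ring_nf
      rw [Finset.sum_congr rfl hinner, Finset.sum_add_distrib, ih]
      -- last row
      have hlast : ∑ b ∈ Finset.Icc 1 (n+1), (((n+1 : ℕ) : ℝ) * |(b : ℝ) - ((n+1:ℕ) : ℝ)|)
          = ((n:ℝ)+1) * (((n:ℝ)+1) * ((n:ℝ)+1) - (n+1) * (n+2) / 2) := by
        have : ∀ b : ℕ, b ∈ Finset.Icc 1 (n+1) →
            (((n+1 : ℕ) : ℝ) * |(b : ℝ) - ((n+1:ℕ) : ℝ)|)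
              = ((n:ℝ)+1) * (((n:ℝ)+1) - b) := by
          intro b hb
          rw [Finset.mem_Icc] at hb
          have h1 : (b : ℝ) ≤ (n : ℝ) + 1 := by exact_mod_cast hb.2
          rw [abs_of_nonpos (by push_cast; linarith)]
          push_cast
          ring
        rw [Finset.sum_congr rfl this, ← Finset.mul_sum]
        congr 1
        rw [Finset.sum_sub_distrib, Finset.sum_const, sum_Icc_id, Nat.card_Icc]
        push_cast
        ring
      rw [hlast]
      -- middle term
      have hmid : ∑ a ∈ Finset.Icc 1 n, ((a : ℝ) * ((n + 1 : ℝ) - a))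
          = ((n:ℝ)+1) * (n * (n+1) / 2) - n * (n+1) * (2*n+1) / 6 := by
        have : ∀ a : ℕ, a ∈ Finset.Icc 1 n →
            ((a : ℝ) * ((n + 1 : ℝ) - a)) = ((n:ℝ)+1) * a - (a:ℝ)^2 := by
          intro a _; ring
        rw [Finset.sum_congr rfl this, Finset.sum_sub_distrib, ← Finset.mul_sum,
          sum_Icc_id, sum_Icc_sq]
      rw [hmid]
      push_cast
      ring

lemma integral_unif_prod (k : ℕ) (g : ℕ × ℕ → ℝ) :
    ∫ p, g p ∂((unifMeasure k).prod (unifMeasure k))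
      = ((k:ℝ)⁻¹ * (k:ℝ)⁻¹) * ∑ p ∈ Finset.Icc 1 k ×ˢ Finset.Icc 1 k, g p := by
  rw [unif_prod, integral_smul_measure,
    integral_finset_sum_measure (fun i _ => my_integrable_dirac g i)]
  simp [integral_dirac, ENNReal.toReal_mul, ENNReal.toReal_inv, smul_eq_mul]

theorem cross_moment_T11_uniform
    {Ω : Type*} [MeasurableSpace Ω] (μ : Measure Ω) [IsProbabilityMeasure μ]
    (k : ℕ) (hk : 2 ≤ k) (x₀ x₁ : Ω → ℕ)
    (hm0 : Measurable x₀) (hm1 : Measurable x₁)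
    (hd0 : Measure.map x₀ μ = unifMeasure k)
    (hd1 : Measure.map x₁ μ = unifMeasure k)
    (hindep : IndepFun x₀ x₁ μ) :
    ∫ ω, (x₀ ω : ℝ) * |(x₁ ω : ℝ) - (x₀ ω : ℝ)| ∂μ
      = ((k : ℝ) - 1) * ((k : ℝ) + 1) ^ 2 / (6 * k) := by
  have hpair : μ.map (fun ω => (x₀ ω, x₁ ω)) = (unifMeasure k).prod (unifMeasure k) := by
    rw [(indepFun_iff_map_prod_eq_prod_map_map hm0.aemeasurable hm1.aemeasurable).1 hindep,
      hd0, hd1]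
  set g : ℕ × ℕ → ℝ := fun p => (p.1 : ℝ) * |(p.2 : ℝ) - (p.1 : ℝ)| with hg
  have hgm : Measurable g := by fun_prop
  have hmap : ∫ ω, g (x₀ ω, x₁ ω) ∂μ = ∫ p, g p ∂(μ.map (fun ω => (x₀ ω, x₁ ω))) := by
    rw [integral_map (hm0.prodMk hm1).aemeasurable hgm.aestronglyMeasurable]
  have key : ∫ ω, g (x₀ ω, x₁ ω) ∂μ
      = ((k:ℝ)⁻¹ * (k:ℝ)⁻¹) * (k * ((k:ℝ) - 1) * ((k:ℝ) + 1) ^ 2 / 6) := by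
    rw [hmap, hpair, integral_unif_prod, cross_sum]
  have hkpos : (0:ℝ) < k := by positivity
  calc ∫ ω, (x₀ ω : ℝ) * |(x₁ ω : ℝ) - (x₀ ω : ℝ)| ∂μ
      = ∫ ω, g (x₀ ω, x₁ ω) ∂μ := rfl
    _ = ((k:ℝ)⁻¹ * (k:ℝ)⁻¹) * (k * ((k:ℝ) - 1) * ((k:ℝ) + 1) ^ 2 / 6) := key
    _ = ((k : ℝ) - 1) * ((k : ℝ) + 1) ^ 2 / (6 * k) := by
        field_simp
end

section
/- Let k ≥ 2 be an integer and let x₀, x₁, x₂, x₃ be i.i.d. random variables uniformly distributed on {1, 2, ..., k}. Let M := E(|x₁ - x₀|). Then E((|x₁ - x₀| - M)(|x₂ - x₁| - M)(|x₃ - x₂| - M)) = -(k - 1)(k - 2)(k + 2)(k + 1)(k² + 5)/(3780k³). -/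
/-!
By independence the joint law of `(x₀, x₁, x₂, x₃)` is uniform on `{1, …, k}⁴`, so `M` and the
cross moment are finite sums. Summing out `x₀` and `x₃` turns the two outer factors into
`g b = ∑ₐ (|b - a| - M)`, a quadratic in `b` with `∑_b g b = 0` by the very definition of `M`.
Writing `|c - b| = (c - b) + 2 (b - c)⁺`, the part linear in `c - b` dies against `∑ g = 0`,
and what is left, `2 ∑_b g b ∑_{c < b} g c (b - c)`, is a polynomial sum in closed form.
-/

open MeasureTheory ProbabilityTheory
open scoped ENNReal

open Finset

theorem smul_sum_dirac_apply_singleton {α : Type*} [MeasurableSpace α]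
    [MeasurableSingletonClass α] [DecidableEq α] (c : ℝ≥0∞) (s : Finset α) (a : α) :
    (c • ∑ p ∈ s, Measure.dirac p) {a} = if a ∈ s then c else 0 := by
  simp [Measure.finsetSum_apply, Set.indicator_apply, sum_ite_eq']

theorem sum_piFinset_const_fin_succ {α R : Type*} [AddCommMonoid R] {n : ℕ} (s : Finset α)
    (F : (Fin (n + 1) → α) → R) :
    ∑ p ∈ Fintype.piFinset (fun _ => s), F p
      = ∑ a ∈ s, ∑ q ∈ Fintype.piFinset (fun _ : Fin n => s), F (Fin.cons a q) := by
  have := filter_piFinset_eq_map_consEquiv (fun _ : Fin (n + 1) => s) (fun _ => True)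
  simp only [filter_true] at this
  rw [this, sum_map, sum_product]
  rfl

section UniformLaw

variable {Ω : Type*} [MeasurableSpace Ω] {μ : Measure Ω} {k : ℕ}

theorem map_eq_smul_sum_dirac_of_iIndepFun {ι : Type*} [Fintype ι] [DecidableEq ι]
    {x : ι → Ω → ℕ} (hmeas : ∀ i, Measurable (x i))
    (hdist : ∀ i, μ.map (x i) = unifMeasure k) (hindep : iIndepFun x μ) :
    μ.map (fun ω i => x i ω) = (k : ℝ≥0∞)⁻¹ ^ Fintype.card ι •
      ∑ p ∈ Fintype.piFinset fun _ => Icc 1 k, Measure.dirac p := by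
  refine Measure.ext_of_singleton fun p => ?_
  have hpre : (fun ω i => x i ω) ⁻¹' {p} = ⋂ i ∈ (univ : Finset ι), x i ⁻¹' {p i} := by
    ext; simp [funext_iff]
  rw [Measure.map_apply (measurable_pi_lambda _ hmeas) (measurableSet_singleton p), hpre,
    hindep.measure_inter_preimage_eq_mul _ fun i _ => measurableSet_singleton _,
    smul_sum_dirac_apply_singleton]
  simp_rw [← Measure.map_apply (hmeas _) (measurableSet_singleton _), hdist, unifMeasure,
    smul_sum_dirac_apply_singleton, prod_ite_zero, Fintype.mem_piFinset, prod_const, card_univ,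
    mem_univ, true_imp_iff]

theorem integral_comp_eq_sum_piFinset {ι : Type*} [Fintype ι] [DecidableEq ι]
    {x : ι → Ω → ℕ} (hmeas : ∀ i, Measurable (x i))
    (hdist : ∀ i, μ.map (x i) = unifMeasure k) (hindep : iIndepFun x μ) (F : (ι → ℕ) → ℝ) :
    ∫ ω, F (fun i => x i ω) ∂μ
      = (k : ℝ)⁻¹ ^ Fintype.card ι * ∑ p ∈ Fintype.piFinset fun _ => Icc 1 k, F p := by
  rw [← integral_map (measurable_pi_lambda _ hmeas).aemeasurable
      (measurable_of_countable F).aestronglyMeasurable,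
    map_eq_smul_sum_dirac_of_iIndepFun hmeas hdist hindep, integral_smul_measure,
    integral_finsetSum_measure fun p _ => integrable_dirac enorm_lt_top]
  simp [integral_dirac, ENNReal.toReal_inv]

theorem integral_fin_four_eq_sum {x : Fin 4 → Ω → ℕ} (hmeas : ∀ i, Measurable (x i))
    (hdist : ∀ i, μ.map (x i) = unifMeasure k) (hindep : iIndepFun x μ)
    (f : ℕ → ℕ → ℕ → ℕ → ℝ) :
    ∫ ω, f (x 0 ω) (x 1 ω) (x 2 ω) (x 3 ω) ∂μ = (k : ℝ)⁻¹ ^ 4 *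
      ∑ a ∈ Ioc 0 k, ∑ b ∈ Ioc 0 k, ∑ c ∈ Ioc 0 k, ∑ d ∈ Ioc 0 k, f a b c d := by
  rw [integral_comp_eq_sum_piFinset hmeas hdist hindep fun p => f (p 0) (p 1) (p 2) (p 3),
    Fintype.card_fin, ← Icc_add_one_left_eq_Ioc]
  congr 1
  simp only [sum_piFinset_const_fin_succ, Fintype.piFinset_of_isEmpty, univ_unique, sum_singleton]
  rfl

end UniformLaw

theorem sum_Ioc_natCast (n : ℕ) : ∑ a ∈ Ioc 0 n, (a : ℝ) = n * (n + 1) / 2 := by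
  induction n with
  | zero => simp
  | succ n ih => rw [sum_Ioc_succ_top (Nat.zero_le n), ih]; push_cast; ring

theorem sum_Ioc_mul_abs_sub (f : ℕ → ℝ) {b n : ℕ} (hb : b ≤ n) :
    ∑ a ∈ Ioc 0 n, f a * |(a : ℝ) - b|
      = ∑ a ∈ Ioc 0 n, f a * (a - b) + 2 * ∑ a ∈ Ioc 0 b, f a * (b - a) := by
  have below : ∑ a ∈ Ioc 0 b, f a * |(a : ℝ) - b| = ∑ a ∈ Ioc 0 b, f a * (b - a) :=
    sum_congr rfl fun a ha => by
      rw [abs_of_nonpos (sub_nonpos.2 (Nat.cast_le.2 (mem_Ioc.1 ha).2)), neg_sub]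
  have above : ∑ a ∈ Ioc b n, f a * |(a : ℝ) - b| = ∑ a ∈ Ioc b n, f a * (a - b) :=
    sum_congr rfl fun a ha => by
      rw [abs_of_nonneg (sub_nonneg.2 (Nat.cast_le.2 (mem_Ioc.1 ha).1.le))]
  have flip : ∑ a ∈ Ioc 0 b, f a * ((a : ℝ) - b) = -∑ a ∈ Ioc 0 b, f a * (b - a) := by
    rw [← sum_neg_distrib]; exact sum_congr rfl fun a _ => by ring
  rw [← sum_Ioc_consecutive _ (Nat.zero_le b) hb, ← sum_Ioc_consecutive _ (Nat.zero_le b) hb,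
    below, above, flip]
  ring

/-- `∑_{a=1}^k (|b - a| - M)` with `M = (k² - 1) / (3k)`, the mean of `|x₁ - x₀|`. -/
noncomputable def centeredRowSum (K b : ℝ) : ℝ := b ^ 2 - (K + 1) * b + (K + 1) * (K + 2) / 6

theorem sum_Ioc_abs_sub {b k : ℕ} (hb : b ≤ k) :
    ∑ a ∈ Ioc 0 k, |(a : ℝ) - b| = centeredRowSum k b + ((k : ℝ) ^ 2 - 1) / 3 := by
  have := sum_Ioc_mul_abs_sub (fun _ => 1) hb
  simp only [one_mul] at this
  rw [this, sum_sub_distrib, sum_sub_distrib, sum_Ioc_natCast, sum_Ioc_natCast]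
  simp only [sum_const, Nat.card_Ioc, Nat.sub_zero, nsmul_eq_mul, centeredRowSum]
  ring

theorem sum_centeredRowSum (K : ℝ) (n : ℕ) :
    ∑ b ∈ Ioc 0 n, centeredRowSum K b = n * (n - K) * (2 * n - K) / 6 := by
  induction n with
  | zero => simp
  | succ n ih =>
    rw [sum_Ioc_succ_top (Nat.zero_le n), ih, centeredRowSum]; push_cast; ring

theorem sum_centeredRowSum_self (k : ℕ) : ∑ b ∈ Ioc 0 k, centeredRowSum k b = 0 := by
  rw [sum_centeredRowSum]; ring

theorem sum_centeredRowSum_mul_sub (K : ℝ) (b : ℕ) :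
    ∑ c ∈ Ioc 0 b, centeredRowSum K c * (b - c) = b * (b - 1) * (b - K) * (b - K - 1) / 12 := by
  induction b with
  | zero => simp
  | succ b ih =>
    have step : ∑ c ∈ Ioc 0 b, centeredRowSum K c * ((b + 1 : ℕ) - c)
        = ∑ c ∈ Ioc 0 b, centeredRowSum K c * (b - c) + ∑ c ∈ Ioc 0 b, centeredRowSum K c := by
      rw [← sum_add_distrib]; exact sum_congr rfl fun c _ => by push_cast; ring
    rw [sum_Ioc_succ_top (Nat.zero_le b), step, ih, sum_centeredRowSum]
    push_cast; ring

theorem sum_centeredRowSum_mul_quartic (K : ℝ) (n : ℕ) :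
    ∑ b ∈ Ioc 0 n, centeredRowSum K b * (b * (b - 1) * (b - K) * (b - K - 1) / 12)
      = n * (90 * n ^ 6 - 315 * K * n ^ 5 + (399 * K ^ 2 - 210) * n ^ 4
          + (525 * K - 210 * K ^ 3) * n ^ 3 + (35 * K ^ 4 - 490 * K ^ 2 + 140) * n ^ 2
          + (210 * K ^ 3 - 210 * K) * n - 35 * K ^ 4 + 91 * K ^ 2 - 20) / 7560 := by
  induction n with
  | zero => simp
  | succ n ih => rw [sum_Ioc_succ_top (Nat.zero_le n), ih, centeredRowSum]; push_cast; ring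

theorem sum_sum_abs_sub (k : ℕ) :
    ∑ a ∈ Ioc 0 k, ∑ b ∈ Ioc 0 k, |(b : ℝ) - a| = k * ((k : ℝ) ^ 2 - 1) / 3 := by
  rw [sum_congr rfl fun a ha => sum_Ioc_abs_sub (mem_Ioc.1 ha).2, sum_add_distrib,
    sum_centeredRowSum_self, sum_const, Nat.card_Ioc, Nat.sub_zero, nsmul_eq_mul]
  ring

theorem sum_path_three {α R : Type*} [CommSemiring R] (s : Finset α) (u : α → α → R) :
    ∑ a ∈ s, ∑ b ∈ s, ∑ c ∈ s, ∑ d ∈ s, u a b * u b c * u c d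
      = ∑ b ∈ s, ∑ c ∈ s, (∑ a ∈ s, u a b) * u b c * ∑ d ∈ s, u c d := by
  simp_rw [← mul_sum, sum_mul]
  rw [sum_comm]
  exact sum_congr rfl fun _ _ => sum_comm

theorem sum_abs_sub_sub_eq_centeredRowSum {k b : ℕ} {M : ℝ}
    (hkM : k * M = ((k : ℝ) ^ 2 - 1) / 3) (hb : b ≤ k) :
    ∑ a ∈ Ioc 0 k, (|(a : ℝ) - b| - M) = centeredRowSum k b := by
  rw [sum_sub_distrib, sum_Ioc_abs_sub hb, sum_const, Nat.card_Ioc, Nat.sub_zero, nsmul_eq_mul]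
  linear_combination -hkM

theorem sum_abs_sub_sub_mul_centeredRowSum {k b : ℕ} (M : ℝ) (hb : b ≤ k) :
    ∑ c ∈ Ioc 0 k, (|(c : ℝ) - b| - M) * centeredRowSum k c
      = ∑ c ∈ Ioc 0 k, c * centeredRowSum k c + 2 * (b * (b - 1) * (b - k) * (b - k - 1) / 12) :=
  calc
    _ = ∑ c ∈ Ioc 0 k, centeredRowSum k c * |(c : ℝ) - b|
          - M * ∑ c ∈ Ioc 0 k, centeredRowSum k c := by
      rw [mul_sum, ← sum_sub_distrib]; exact sum_congr rfl fun _ _ => by ring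
    _ = ∑ c ∈ Ioc 0 k, c * centeredRowSum k c - b * ∑ c ∈ Ioc 0 k, centeredRowSum k c
          + 2 * ∑ c ∈ Ioc 0 b, centeredRowSum k c * (b - c)
          - M * ∑ c ∈ Ioc 0 k, centeredRowSum k c := by
      have shift : ∑ c ∈ Ioc 0 k, centeredRowSum k c * ((c : ℝ) - b)
          = ∑ c ∈ Ioc 0 k, c * centeredRowSum k c - b * ∑ c ∈ Ioc 0 k, centeredRowSum k c := by
        rw [mul_sum, ← sum_sub_distrib]; exact sum_congr rfl fun _ _ => by ring
      rw [sum_Ioc_mul_abs_sub _ hb, shift]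
    _ = _ := by rw [sum_centeredRowSum_self, sum_centeredRowSum_mul_sub]; ring

theorem sum_path_three_abs_sub_sub (k : ℕ) (M : ℝ) (hkM : k * M = ((k : ℝ) ^ 2 - 1) / 3) :
    ∑ a ∈ Ioc 0 k, ∑ b ∈ Ioc 0 k, ∑ c ∈ Ioc 0 k, ∑ d ∈ Ioc 0 k,
        (|(b : ℝ) - a| - M) * (|(c : ℝ) - b| - M) * (|(d : ℝ) - c| - M)
      = -(k * ((k : ℝ) - 1) * (k - 2) * (k + 1) * (k + 2) * (k ^ 2 + 5)) / 3780 := by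
  rw [sum_path_three]
  calc _ = ∑ b ∈ Ioc 0 k, centeredRowSum k b
          * ∑ c ∈ Ioc 0 k, (|(c : ℝ) - b| - M) * centeredRowSum k c := by
        refine sum_congr rfl fun b hb => ?_
        have first : ∑ a ∈ Ioc 0 k, (|(b : ℝ) - a| - M) = centeredRowSum k b := by
          simp_rw [abs_sub_comm (b : ℝ)]
          exact sum_abs_sub_sub_eq_centeredRowSum hkM (mem_Ioc.1 hb).2
        rw [first, mul_sum]
        refine sum_congr rfl fun c hc => ?_
        rw [sum_abs_sub_sub_eq_centeredRowSum hkM (mem_Ioc.1 hc).2]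
        ring
    _ = (∑ c ∈ Ioc 0 k, c * centeredRowSum k c) * ∑ b ∈ Ioc 0 k, centeredRowSum k b
          + 2 * ∑ b ∈ Ioc 0 k, centeredRowSum k b * (b * (b - 1) * (b - k) * (b - k - 1) / 12) := by
        rw [sum_congr rfl fun b hb =>
            congrArg _ (sum_abs_sub_sub_mul_centeredRowSum M (mem_Ioc.1 hb).2),
          mul_sum, mul_sum, ← sum_add_distrib]
        exact sum_congr rfl fun _ _ => by ring
    _ = _ := by rw [sum_centeredRowSum_self, sum_centeredRowSum_mul_quartic]; ring

theorem centered_cross_moment_T0111_uniform_general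
    {Ω : Type*} [MeasurableSpace Ω] (μ : Measure Ω)
    (k : ℕ) (hk : 2 ≤ k) (x : Fin 4 → Ω → ℕ)
    (hmeas : ∀ i, Measurable (x i))
    (hdist : ∀ i, Measure.map (x i) μ = unifMeasure k)
    (hindep : iIndepFun x μ)
    (M : ℝ) (hM : M = ∫ ω, |(x 1 ω : ℝ) - (x 0 ω : ℝ)| ∂μ) :
    ∫ ω, (|(x 1 ω : ℝ) - (x 0 ω : ℝ)| - M) * (|(x 2 ω : ℝ) - (x 1 ω : ℝ)| - M)
        * (|(x 3 ω : ℝ) - (x 2 ω : ℝ)| - M) ∂μ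
      = -(((k : ℝ) - 1) * ((k : ℝ) - 2) * ((k : ℝ) + 2) * ((k : ℝ) + 1)
          * ((k : ℝ) ^ 2 + 5)) / (3780 * (k : ℝ) ^ 3) := by
  have hk0 : (k : ℝ) ≠ 0 := Nat.cast_ne_zero.2 (by omega)
  have hkM : k * M = ((k : ℝ) ^ 2 - 1) / 3 := by
    rw [hM, integral_fin_four_eq_sum hmeas hdist hindep fun a b _ _ => |(b : ℝ) - a|]
    simp only [sum_const, Nat.card_Ioc, Nat.sub_zero, nsmul_eq_mul, ← mul_sum]
    rw [sum_sum_abs_sub]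
    field_simp
  rw [integral_fin_four_eq_sum hmeas hdist hindep fun a b c d =>
      (|(b : ℝ) - a| - M) * (|(c : ℝ) - b| - M) * (|(d : ℝ) - c| - M),
    sum_path_three_abs_sub_sub k M hkM]
  field_simp

theorem centered_cross_moment_T0111_uniform
    {Ω : Type*} [MeasurableSpace Ω] (μ : Measure Ω) [IsProbabilityMeasure μ]
    (k : ℕ) (hk : 2 ≤ k) (x : Fin 4 → Ω → ℕ)
    (hmeas : ∀ i, Measurable (x i))
    (hdist : ∀ i, Measure.map (x i) μ = unifMeasure k)
    (hindep : iIndepFun x μ)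
    (M : ℝ) (hM : M = ∫ ω, |(x 1 ω : ℝ) - (x 0 ω : ℝ)| ∂μ) :
    ∫ ω, (|(x 1 ω : ℝ) - (x 0 ω : ℝ)| - M) * (|(x 2 ω : ℝ) - (x 1 ω : ℝ)| - M)
        * (|(x 3 ω : ℝ) - (x 2 ω : ℝ)| - M) ∂μ
      = -(((k : ℝ) - 1) * ((k : ℝ) - 2) * ((k : ℝ) + 2) * ((k : ℝ) + 1)
          * ((k : ℝ) ^ 2 + 5)) / (3780 * (k : ℝ) ^ 3) :=
  centered_cross_moment_T0111_uniform_general μ k hk x hmeas hdist hindep M hM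
end
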